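/- arXiv:2302.05156 — 5 statements merged into one kernel-verified Lean document; each statement's English description precedes it below -/
import Mathlib

section
/- Let n ∈ ℕ, n ≥ 1, and let V ⊆ ℝ^n be convex and non-empty. Then a set S ⊆ ℝ^n is relative generic in V if, and only if, there exists a Zariski-open set O ⊆ ℝ^n such that O ∩ V ≠ ∅ and O ∩ V ⊆ S ∩ V. -/
/-!
A Zariski-open set `O` that meets a convex set `V` at a point `x` is dense in `V`: for `y ∈ V`,
a polynomial cutting out `Oᶜ` and not vanishing at `x` restricts on the line through `y` and `x`
to a nonzero univariate polynomial, which has only finitely many roots; hence the points of the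
segment `[y, x]` close enough to `y` lie in `O ∩ V`. Both directions of the equivalence then
exchange `O` and the algebraic set `Oᶜ`.
-/

def IsAlgebraicSet {ι : Type} [Fintype ι] (W : Set (ι → ℝ)) : Prop :=
  ∃ (k : ℕ) (p : Fin k → MvPolynomial ι ℝ),
    W = {x | ∀ i, MvPolynomial.eval x (p i) = 0}

def IsZariskiOpen {ι : Type} [Fintype ι] (O : Set (ι → ℝ)) : Prop :=
  IsAlgebraicSet Oᶜ

/-- `V ⊆ closure (Wᶜ ∩ V)` expresses that `Wᶜ ∩ V` is dense in `V`. -/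
def RelGeneric {ι : Type} [Fintype ι] (S V : Set (ι → ℝ)) : Prop :=
  ∃ W : Set (ι → ℝ), IsAlgebraicSet W ∧ Sᶜ ∩ V ⊆ W ∩ V ∧ V ⊆ closure (Wᶜ ∩ V)

open Filter Topology Polynomial AffineMap

theorem MvPolynomial.exists_eval_lineMap {R ι : Type*} [CommRing R] (p : MvPolynomial ι R)
    (x y : ι → R) : ∃ q : R[X], ∀ t, q.eval t = eval (lineMap x y t) p := by
  refine ⟨eval₂ Polynomial.C
    (fun j => Polynomial.C (x j) + Polynomial.X * Polynomial.C (y j - x j)) p, fun t => ?_⟩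
  have hC : (Polynomial.evalRingHom t).comp Polynomial.C = RingHom.id R := by ext; simp
  rw [polynomial_eval_eval₂, hC, lineMap_apply_module']
  congr 1
  ext j
  simp [add_comm]

theorem IsZariskiOpen.finite_setOf_lineMap_notMem {ι : Type} [Fintype ι] {O : Set (ι → ℝ)}
    (hO : IsZariskiOpen O) {x : ι → ℝ} (hx : x ∈ O) (y : ι → ℝ) :
    {t : ℝ | lineMap y x t ∉ O}.Finite := by
  obtain ⟨k, p, hp⟩ := hO
  obtain ⟨i, hi⟩ : ∃ i, MvPolynomial.eval x (p i) ≠ 0 := by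
    by_contra! h
    exact (show x ∈ Oᶜ by rw [hp]; exact h) hx
  obtain ⟨q, hq⟩ := (p i).exists_eval_lineMap y x
  have hq0 : q ≠ 0 := by
    rintro rfl
    exact hi (by simpa using (hq 1).symm)
  refine (finite_setOfPred_isRoot hq0).subset fun t ht => ?_
  have hroot : lineMap y x t ∈ Oᶜ := ht
  rw [hp] at hroot
  simp [hq, hroot i]

theorem IsZariskiOpen.subset_closure_inter_of_convex {ι : Type} [Fintype ι] {O V : Set (ι → ℝ)}
    (hO : IsZariskiOpen O) (hV : Convex ℝ V) (hOV : (O ∩ V).Nonempty) :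
    V ⊆ closure (O ∩ V) := by
  obtain ⟨x, hxO, hxV⟩ := hOV
  intro y hy
  have htendsto : Tendsto (lineMap y x) (𝓝[>] (0 : ℝ)) (𝓝 y) :=
    (lineMap_continuous.tendsto' 0 y (lineMap_apply_zero y x)).mono_left nhdsWithin_le_nhds
  refine mem_closure_of_tendsto htendsto ?_
  have hO_near : ∀ᶠ t in 𝓝[>] (0 : ℝ), lineMap y x t ∈ O :=
    nhdsGT_le_nhdsNE 0 <| nhdsNE_le_cofinite 0 <|
      eventually_cofinite.2 (hO.finite_setOf_lineMap_notMem hxO y)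
  filter_upwards [hO_near, Ioo_mem_nhdsGT one_pos] with t htO ht
  exact ⟨htO, hV.lineMap_mem hy hxV ⟨ht.1.le, ht.2.le⟩⟩

theorem relGeneric_iff_zariskiOpen_of_convex_general
    (n : ℕ) (S V : Set (Fin n → ℝ))
    (hV : Convex ℝ V) (hVne : V.Nonempty) :
    RelGeneric S V ↔
      ∃ O : Set (Fin n → ℝ), IsZariskiOpen O ∧ (O ∩ V).Nonempty ∧ O ∩ V ⊆ S ∩ V := by
  constructor
  · rintro ⟨W, hW, hSW, hVW⟩
    refine ⟨Wᶜ, by rwa [IsZariskiOpen, compl_compl], closure_nonempty_iff.mp (hVne.mono hVW),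
      fun x hx => ⟨not_not.mp fun hxS => hx.1 (hSW ⟨hxS, hx.2⟩).1, hx.2⟩⟩
  · rintro ⟨O, hO, hOV, hOS⟩
    refine ⟨Oᶜ, hO, fun x hx => ⟨fun hxO => hx.1 (hOS ⟨hxO, hx.2⟩).1, hx.2⟩, ?_⟩
    rw [compl_compl]
    exact hO.subset_closure_inter_of_convex hV hOV

/-- for a convex non-empty reference set `V ⊆ ℝ^n`, a set `S` is
relative generic in `V` iff there is a Zariski-open set `O` with
`O ∩ V ≠ ∅` and `O ∩ V ⊆ S ∩ V`. -/
theorem relGeneric_iff_zariskiOpen_of_convex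
    (n : ℕ) (hn : 1 ≤ n) (S V : Set (Fin n → ℝ))
    (hV : Convex ℝ V) (hVne : V.Nonempty) :
    RelGeneric S V ↔
      ∃ O : Set (Fin n → ℝ), IsZariskiOpen O ∧ (O ∩ V).Nonempty ∧ O ∩ V ⊆ S ∩ V :=
  relGeneric_iff_zariskiOpen_of_convex_general n S V hV hVne
end

section
/- Let ℓ, n ∈ ℕ, ℓ, n ≥ 1, and let E, Q ∈ ℝ^{ℓ×n} satisfy EᵀQ = QᵀE. Set k = rank E. Then there exist orthogonal matrices P ∈ ℝ^{ℓ×ℓ}, T ∈ ℝ^{n×n}, an invertible diagonal matrix Σ_k ∈ ℝ^{k×k}, and matrices Q̃ ∈ ℝ^{k×k}, R₁ ∈ ℝ^{(ℓ−k)×k}, R₂ ∈ ℝ^{(ℓ−k)×(n−k)} such that: PET is the block matrix [[Σ_k, 0],[0, 0]]; PQT is the block matrix [[Q̃, 0],[R₁, R₂]]; Tᵀ(EᵀQ)T is the block matrix [[Σ_k Q̃, 0],[0, 0]]; Σ_k Q̃ = Q̃ᵀ Σ_k; rank Q̃ = rank(EᵀQ); and EᵀQ is positive semidefinite if, and only if,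 Σ_k Q̃ is positive semidefinite. -/
/-!
Take a singular value decomposition `P E T = [[Σ, 0], [0, 0]]` with `P`, `T` orthogonal and `Σ`
positive diagonal, and cut `P Q T` into the same blocks `[[Q̃, B], [R₁, R₂]]`. As `Pᵀ P = 1`,
`Tᵀ (EᵀQ) T = (P E T)ᵀ (P Q T) = [[Σ Q̃, Σ B], [0, 0]]`, and this matrix is symmetric because
`EᵀQ` is; so `Σ B = 0`, hence `B = 0`, and `Σ Q̃` is symmetric. Rank and positive
semidefiniteness survive the orthogonal congruence by `T` and are read off the corner `Σ Q̃`.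
-/

open Matrix

/-- The order-preserving identification `Fin k ⊕ Fin (l - k) ≃ Fin l` for `k ≤ l`. -/
def sumEquiv (k l : ℕ) (h : k ≤ l) : Fin k ⊕ Fin (l - k) ≃ Fin l :=
  finSumFinEquiv.trans (finCongr (Nat.add_sub_cancel' h))

open scoped ComplexOrder

variable {m n κ μ ν : Type*}

lemma Function.exists_perm_ne_zero_inl_eq_zero_inr [Fintype n] [Fintype κ] [Fintype ν]
    {M : Type*} [Zero M] (f : n → M) (σ : κ ⊕ ν ≃ n)
    (hκ : Fintype.card κ = Nat.card {i // f i ≠ 0}) :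
    ∃ π : Equiv.Perm n, (∀ i, f (π (σ (.inl i))) ≠ 0) ∧ ∀ j, f (π (σ (.inr j))) = 0 := by
  classical
  rw [Nat.card_eq_fintype_card] at hκ
  have hν : Fintype.card ν = Fintype.card {i // ¬f i ≠ 0} := by
    have := Fintype.card_congr σ
    rw [Fintype.card_sum] at this
    rw [Fintype.card_subtype_compl, ← hκ]
    omega
  let e := (Equiv.sumCongr (Fintype.equivOfCardEq hκ) (Fintype.equivOfCardEq hν)).trans
    (Equiv.sumCompl fun i => f i ≠ 0)
  refine ⟨σ.symm.trans e, fun i => ?_, fun j => ?_⟩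
  · simpa [e] using ((Fintype.equivOfCardEq hκ) i).2
  · simpa [e] using ((Fintype.equivOfCardEq hν) j).2

lemma Orthonormal.exists_orthonormalBasis_sum_inl {𝕜 E : Type*} [RCLike 𝕜]
    [NormedAddCommGroup E] [InnerProductSpace 𝕜 E] [FiniteDimensional 𝕜 E] [Fintype κ]
    [Fintype μ] {u : κ → E}
    (hu : Orthonormal 𝕜 u) (hcard : Module.finrank 𝕜 E = Fintype.card (κ ⊕ μ)) :
    ∃ b : OrthonormalBasis (κ ⊕ μ) 𝕜 E, ∀ i, b (.inl i) = u i := by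
  have hv : Orthonormal 𝕜 ((Set.range Sum.inl).domRestrict (Sum.elim u 0 : κ ⊕ μ → E)) := by
    have hrestrict : (Set.range Sum.inl).domRestrict (Sum.elim u 0 : κ ⊕ μ → E) =
        u ∘ (Equiv.ofInjective _ Sum.inl_injective).symm := by
      funext ⟨_, i, rfl⟩
      simp only [Function.comp_apply, Equiv.ofInjective_symm_apply]
      rfl
    rw [hrestrict]
    exact hu.comp _ (Equiv.injective _)
  obtain ⟨b, hb⟩ := hv.exists_orthonormalBasis_extension_of_card_eq hcard
  exact ⟨b, fun i => hb _ ⟨i, rfl⟩⟩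

namespace Matrix

lemma exists_eq_reindex_fromBlocks {R : Type*} {m₁ m₂ n₁ n₂ : Type*} (M : Matrix m n R)
    (σm : m₁ ⊕ m₂ ≃ m) (σn : n₁ ⊕ n₂ ≃ n) :
    ∃ A B C D, M = reindex σm σn (fromBlocks A B C D) :=
  let N := (reindex σm σn).symm M
  ⟨N.toBlocks₁₁, N.toBlocks₁₂, N.toBlocks₂₁, N.toBlocks₂₂, by
    rw [fromBlocks_toBlocks, Equiv.apply_symm_apply]⟩

lemma rank_fromBlocks_zero {R : Type*} [CommRing R] [StrongRankCondition R] {κ' : Type*}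
    [Fintype κ] [Fintype κ'] [Fintype ν] [DecidableEq κ] [DecidableEq κ']
    (A : Matrix κ κ' R) : (fromBlocks A 0 0 0 : Matrix (κ ⊕ μ) (κ' ⊕ ν) R).rank = A.rank := by
  have hsandwich : (fromBlocks A 0 0 0 : Matrix (κ ⊕ μ) (κ' ⊕ ν) R) =
      fromRows (1 : Matrix κ κ R) 0 * A * fromCols (1 : Matrix κ' κ' R) 0 := by
    rw [fromRows_mul, fromRows_mul_fromCols]
    simp
  refine le_antisymm ?_ (rank_submatrix_le (fromBlocks A 0 0 0 : Matrix (κ ⊕ μ) (κ' ⊕ ν) R)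
    Sum.inl Sum.inl)
  rw [hsandwich]
  exact (rank_mul_le_left _ _).trans (rank_mul_le_right _ _)

lemma posSemidef_fromBlocks_zero_iff {𝕜 : Type*} [RCLike 𝕜] [Fintype κ] [Fintype μ]
    [DecidableEq κ] (A : Matrix κ κ 𝕜) :
    (fromBlocks A 0 0 0 : Matrix (κ ⊕ μ) (κ ⊕ μ) 𝕜).PosSemidef ↔ A.PosSemidef := by
  refine ⟨fun h => h.submatrix (Sum.inl : κ → κ ⊕ μ), fun h => ?_⟩
  have hsandwich : (fromBlocks A 0 0 0 : Matrix (κ ⊕ μ) (κ ⊕ μ) 𝕜) =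
      fromRows (1 : Matrix κ κ 𝕜) 0 * A * (fromRows (1 : Matrix κ κ 𝕜) (0 : Matrix μ κ 𝕜))ᴴ := by
    rw [conjTranspose_fromRows_eq_fromCols_conjTranspose, fromRows_mul, fromRows_mul_fromCols]
    simp
  rw [hsandwich]
  exact h.mul_mul_conjTranspose_same _

lemma eq_zero_of_isSymm_fromBlocks_mul {R : Type*} [CommRing R] [Fintype κ] [DecidableEq κ]
    {S A : Matrix κ κ R} {B : Matrix κ ν R} (hS : IsUnit S)
    (h : (fromBlocks (S * A) (S * B) 0 0 : Matrix (κ ⊕ ν) (κ ⊕ ν) R).IsSymm) :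
    B = 0 ∧ (S * A).IsSymm := by
  obtain ⟨hSA, hSB, -, -⟩ := isSymm_fromBlocks_iff.mp h
  rw [transpose_eq_zero, ← Matrix.mul_zero S] at hSB
  have := hS.invertible
  exact ⟨mul_right_injective_of_invertible S hSB, hSA⟩

lemma transpose_mul_mul_eq_of_orthogonal {R : Type*} [CommRing R] [Fintype m] [Fintype n]
    [DecidableEq m] {P : Matrix m m R} (hP : Pᵀ * P = 1) (E Q : Matrix m n R) (T : Matrix n n R) :
    Tᵀ * (Eᵀ * Q) * T = (P * E * T)ᵀ * (P * Q * T) := by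
  simp only [transpose_mul, Matrix.mul_assoc]
  rw [← Matrix.mul_assoc Pᵀ P, hP, Matrix.one_mul]

lemma rank_transpose_mul_mul_of_orthogonal [Fintype n] [DecidableEq n] (M : Matrix n n ℝ)
    {T : Matrix n n ℝ} (hT : Tᵀ * T = 1) : (Tᵀ * M * T).rank = M.rank := by
  have hdet : IsUnit T.det := isUnit_det_of_left_inverse hT
  rw [rank_mul_eq_left_of_isUnit_det _ _ hdet,
    rank_mul_eq_right_of_isUnit_det _ _ (by rwa [det_transpose])]

lemma posSemidef_transpose_mul_mul_iff_of_orthogonal [Fintype n] [DecidableEq n]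
    (M : Matrix n n ℝ) {T : Matrix n n ℝ} (hT : Tᵀ * T = 1) :
    (Tᵀ * M * T).PosSemidef ↔ M.PosSemidef := by
  have hT : IsUnit T := (isUnit_iff_isUnit_det T).mpr (isUnit_det_of_left_inverse hT)
  simpa [star_eq_conjTranspose] using hT.posSemidef_star_left_conjugate_iff (x := M)

lemma transpose_submatrix_mul_mul_submatrix [Fintype n] {R : Type*} [CommSemiring R]
    (M A : Matrix n n R) (π : Equiv.Perm n) :
    (M.submatrix id π)ᵀ * A * M.submatrix id π = (Mᵀ * A * M).submatrix π π := by
  rw [← submatrix_mul_equiv _ _ _ (Equiv.refl n), ← submatrix_mul_equiv _ _ _ (Equiv.refl n)]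
  simp [transpose_submatrix]

lemma IsHermitian.transpose_eigenvectorUnitary_mul_mul [Fintype n] [DecidableEq n]
    {A : Matrix n n ℝ} (hA : A.IsHermitian) :
    (hA.eigenvectorUnitary : Matrix n n ℝ)ᵀ * A * hA.eigenvectorUnitary =
      diagonal hA.eigenvalues := by
  simpa [Unitary.conjStarAlgAut_apply, star_eq_conjTranspose] using
    hA.conjStarAlgAut_star_eigenvectorUnitary

lemma PosSemidef.exists_orthogonal_transpose_mul_mul_eq_fromBlocks [Fintype n] [DecidableEq n]
    [Fintype κ] [Fintype ν] [DecidableEq κ] [DecidableEq ν]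
    {A : Matrix n n ℝ} (hA : A.PosSemidef) (σ : κ ⊕ ν ≃ n) (hκ : Fintype.card κ = A.rank) :
    ∃ (T : Matrix n n ℝ) (d : κ → ℝ), Tᵀ * T = 1 ∧ (∀ i, 0 < d i) ∧
      Tᵀ * A * T = reindex σ σ (fromBlocks (diagonal d) 0 0 0) := by
  set V : Matrix n n ℝ := (hA.isHermitian.eigenvectorUnitary : Matrix n n ℝ)
  set ev := hA.isHermitian.eigenvalues
  obtain ⟨π, hinl, hinr⟩ := ev.exists_perm_ne_zero_inl_eq_zero_inr σ
    (by rw [hκ, hA.isHermitian.rank_eq_card_non_zero_eigs, Nat.card_eq_fintype_card])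
  set d := fun i => ev (π (σ (.inl i)))
  have hblocks : fromBlocks (diagonal d) 0 0 0 = diagonal (ev ∘ π ∘ σ) := by
    rw [← diagonal_zero, fromBlocks_diagonal]
    congr
    funext c
    cases c <;> simp [d, hinr]
  refine ⟨V.submatrix id π, d, ?_, fun i => (hA.eigenvalues_nonneg _).lt_of_ne' (hinl i), ?_⟩
  · have hV : Vᵀ * V = 1 := by
      simpa [star_eq_conjTranspose] using
        Unitary.coe_star_mul_self hA.isHermitian.eigenvectorUnitary
    rw [← Matrix.mul_one (V.submatrix id π)ᵀ, transpose_submatrix_mul_mul_submatrix,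
      Matrix.mul_one, hV, submatrix_one_equiv]
  · rw [transpose_submatrix_mul_mul_submatrix,
      hA.isHermitian.transpose_eigenvectorUnitary_mul_mul, submatrix_diagonal_equiv, hblocks,
      reindex_apply, submatrix_diagonal_equiv]
    congr
    funext
    simp

/-- The columns of `F` are pairwise orthogonal; the nonzero ones, normalized, extend to an
orthonormal basis, and `P` is the matrix whose rows are that basis. -/
lemma exists_orthogonal_mul_eq_fromBlocks_sqrt [Fintype m] [DecidableEq m] [Fintype n]
    [Fintype κ] [Fintype μ] [DecidableEq κ] [DecidableEq μ] {F : Matrix m n ℝ}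
    (σm : κ ⊕ μ ≃ m) (σn : κ ⊕ ν ≃ n) {d : κ → ℝ} (hd : ∀ i, 0 < d i)
    (hF : Fᵀ * F = reindex σn σn (fromBlocks (diagonal d) 0 0 0)) :
    ∃ P : Matrix m m ℝ, Pᵀ * P = 1 ∧
      P * F = reindex σm σn (fromBlocks (diagonal fun i => √(d i)) 0 0 0) := by
  set col : κ ⊕ ν → EuclideanSpace ℝ m := fun c => WithLp.toLp 2 fun p => F p (σn c)
  have hcol : ∀ c c', inner ℝ (col c) (col c') = fromBlocks (diagonal d) 0 0 0 c c' := by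
    intro c c'
    have h := congr_fun₂ hF (σn c) (σn c')
    simp only [reindex_apply, submatrix_apply, Equiv.symm_apply_apply] at h
    rw [← h]
    simp [col, EuclideanSpace.inner_toLp_toLp, mul_apply, dotProduct, mul_comm]
  have hcol_inr : ∀ j, col (.inr j) = 0 := fun j => inner_self_eq_zero.mp (by rw [hcol]; simp)
  set u : κ → EuclideanSpace ℝ m := fun i => (√(d i))⁻¹ • col (.inl i)
  have hu : Orthonormal ℝ u := by
    rw [orthonormal_iff_ite]
    intro i j
    simp only [u, real_inner_smul_left, real_inner_smul_right, hcol, fromBlocks_apply₁₁,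
      diagonal_apply]
    split_ifs with hij
    · subst hij
      have hs0 : √(d i) ≠ 0 := (Real.sqrt_pos.mpr (hd i)).ne'
      field_simp
      exact (Real.sq_sqrt (hd i).le).symm
    · simp
  obtain ⟨b, hb⟩ := hu.exists_orthonormalBasis_sum_inl (μ := μ) (by simp [Fintype.card_congr σm])
  set P := ((EuclideanSpace.basisFun m ℝ).toBasis.toMatrix (b.reindex σm))ᵀ
  have hP : ∀ a c, (P * F) (σm a) (σn c) = inner ℝ (b a) (col c) := by
    intro a c
    simp [P, col, mul_apply, Module.Basis.toMatrix_apply, PiLp.inner_apply, mul_comm]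
  refine ⟨P, ?_, ?_⟩
  · simpa [P, conjTranspose_eq_transpose_of_trivial] using
      (EuclideanSpace.basisFun m ℝ).toMatrix_orthonormalBasis_self_mul_conjTranspose
        (b.reindex σm)
  ext p q
  obtain ⟨a, rfl⟩ := σm.surjective p
  obtain ⟨c, rfl⟩ := σn.surjective q
  rw [hP]
  simp only [reindex_apply, submatrix_apply, Equiv.symm_apply_apply]
  rcases c with j | j
  · have hcol_inl : col (.inl j) = √(d j) • b (.inl j) := by
      rw [hb]
      simp [u, smul_smul, mul_inv_cancel₀ (Real.sqrt_pos.mpr (hd j)).ne']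
    rw [hcol_inl, inner_smul_right, orthonormal_iff_ite.mp b.orthonormal]
    rcases a with i | i
    · by_cases hij : i = j <;> simp [hij]
    · simp
  · rw [hcol_inr, inner_zero_right]
    rcases a with i | i <;> simp

theorem exists_orthogonal_mul_mul_eq_fromBlocks_diagonal [Fintype m] [DecidableEq m]
    [Fintype n] [DecidableEq n] [Fintype κ] [Fintype μ] [Fintype ν] [DecidableEq κ]
    [DecidableEq μ] [DecidableEq ν] (E : Matrix m n ℝ) (σm : κ ⊕ μ ≃ m)
    (σn : κ ⊕ ν ≃ n) (hκ : Fintype.card κ = E.rank) :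
    ∃ (P : Matrix m m ℝ) (T : Matrix n n ℝ) (d : κ → ℝ), Pᵀ * P = 1 ∧ Tᵀ * T = 1 ∧
      (∀ i, 0 < d i) ∧ P * E * T = reindex σm σn (fromBlocks (diagonal d) 0 0 0) := by
  have hG : (Eᵀ * E).PosSemidef := by
    simpa [conjTranspose_eq_transpose_of_trivial] using posSemidef_conjTranspose_mul_self E
  obtain ⟨T, d, hT, hd, hTGT⟩ :=
    hG.exists_orthogonal_transpose_mul_mul_eq_fromBlocks σn (by rw [hκ, rank_transpose_mul_self])
  obtain ⟨P, hP, hPET⟩ := exists_orthogonal_mul_eq_fromBlocks_sqrt (F := E * T) σm σn hd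
    (by rw [← hTGT, transpose_mul]; simp only [Matrix.mul_assoc])
  exact ⟨P, T, _, hP, hT, fun i => Real.sqrt_pos.mpr (hd i), by rw [Matrix.mul_assoc, hPET]⟩

end Matrix

/-- structure of pairs `(E, Q)` with `EᵀQ = QᵀE`. -/
theorem pH_pair_normal_form (ℓ n : ℕ)
    (E Q : Matrix (Fin ℓ) (Fin n) ℝ) (hEQ : Eᵀ * Q = Qᵀ * E) :
    ∃ (P : Matrix (Fin ℓ) (Fin ℓ) ℝ) (T : Matrix (Fin n) (Fin n) ℝ)
      (Sk Qt : Matrix (Fin E.rank) (Fin E.rank) ℝ)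
      (R₁ : Matrix (Fin (ℓ - E.rank)) (Fin E.rank) ℝ)
      (R₂ : Matrix (Fin (ℓ - E.rank)) (Fin (n - E.rank)) ℝ),
      -- P and T are orthogonal
      Pᵀ * P = 1 ∧ Tᵀ * T = 1 ∧
      -- Sk is an invertible diagonal matrix
      (∃ d : Fin E.rank → ℝ, Sk = Matrix.diagonal d) ∧ IsUnit Sk ∧
      -- P E T = [[Sk, 0], [0, 0]]
      P * E * T =
        Matrix.reindex (sumEquiv E.rank ℓ (by simpa using E.rank_le_height))
          (sumEquiv E.rank n (by simpa using E.rank_le_width))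
          (Matrix.fromBlocks Sk 0 0 0) ∧
      -- P Q T = [[Qt, 0], [R₁, R₂]]
      P * Q * T =
        Matrix.reindex (sumEquiv E.rank ℓ (by simpa using E.rank_le_height))
          (sumEquiv E.rank n (by simpa using E.rank_le_width))
          (Matrix.fromBlocks Qt 0 R₁ R₂) ∧
      -- Tᵀ (EᵀQ) T = [[Sk Qt, 0], [0, 0]]
      Tᵀ * (Eᵀ * Q) * T =
        Matrix.reindex (sumEquiv E.rank n (by simpa using E.rank_le_width))
          (sumEquiv E.rank n (by simpa using E.rank_le_width))
          (Matrix.fromBlocks (Sk * Qt) 0 0 0) ∧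
      -- Sk Qt = Qtᵀ Sk and rank Qt = rank (EᵀQ)
      Sk * Qt = Qtᵀ * Sk ∧ Qt.rank = (Eᵀ * Q).rank ∧
      -- EᵀQ is positive semidefinite iff Sk Qt is positive semidefinite
      ((Eᵀ * Q).PosSemidef ↔ (Sk * Qt).PosSemidef) := by
  set σl := sumEquiv E.rank ℓ (by simpa using E.rank_le_height)
  set σn := sumEquiv E.rank n (by simpa using E.rank_le_width)
  obtain ⟨P, T, d, hP, hT, hd, hPET⟩ :=
    E.exists_orthogonal_mul_mul_eq_fromBlocks_diagonal σl σn (Fintype.card_fin _)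
  have hSk : IsUnit (diagonal d) :=
    isUnit_diagonal.mpr (Pi.isUnit_iff.mpr fun i => (hd i).ne'.isUnit)
  obtain ⟨Qt, B, R₁, R₂, hPQT⟩ := exists_eq_reindex_fromBlocks (P * Q * T) σl σn
  have hconj : Tᵀ * (Eᵀ * Q) * T =
      reindex σn σn (fromBlocks (diagonal d * Qt) (diagonal d * B) 0 0) := by
    rw [transpose_mul_mul_eq_of_orthogonal hP, hPET, hPQT, transpose_reindex, reindex_apply,
      reindex_apply, submatrix_mul_equiv, fromBlocks_transpose, fromBlocks_multiply]
    simp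
  have hsymm : (fromBlocks (diagonal d * Qt) (diagonal d * B) 0 0).IsSymm := by
    have h : (Tᵀ * (Eᵀ * Q) * T).IsSymm := by
      simp [IsSymm, transpose_mul, Matrix.mul_assoc, hEQ]
    simpa [hconj] using h.reindex σn.symm
  obtain ⟨rfl, hSkQt⟩ := eq_zero_of_isSymm_fromBlocks_mul hSk hsymm
  rw [Matrix.mul_zero] at hconj
  refine ⟨P, T, diagonal d, Qt, R₁, R₂, hP, hT, ⟨d, rfl⟩, hSk, hPET, hPQT, hconj, ?_, ?_, ?_⟩
  · rw [← hSkQt.eq, transpose_mul, diagonal_transpose]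
  · rw [← rank_transpose_mul_mul_of_orthogonal _ hT, hconj, rank_reindex, rank_fromBlocks_zero,
      rank_mul_eq_right_of_isUnit_det _ _ ((isUnit_iff_isUnit_det _).mp hSk)]
  · rw [← posSemidef_transpose_mul_mul_iff_of_orthogonal _ hT, hconj, reindex_apply,
      posSemidef_submatrix_equiv, posSemidef_fromBlocks_zero_iff]
end

section
/- Let ℓ, n ∈ ℕ, ℓ, n ≥ 1. Each of the sets S₁ = {(E,Q) ∈ ℝ^{ℓ×n} × ℝ^{ℓ×n} : rank Q = min{ℓ,n}} and S₂ = {(E,Q) ∈ ℝ^{ℓ×n} × ℝ^{ℓ×n} : rank E = min{ℓ,n}} is relative generic in the reference set V = {(E,Q) ∈ ℝ^{ℓ×n} × ℝ^{ℓ×n} : EᵀQ = QᵀE}. -/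
open Matrix

/-- Coordinates of the product `ℝ^{ℓ×n} × ℝ^{ℓ×n}` of two matrix spaces. -/
abbrev PairIdx (ℓ n : ℕ) := (Fin ℓ × Fin n) ⊕ (Fin ℓ × Fin n)

/-- First matrix `E` of a pair `(E, Q)`. -/
def pE {ℓ n : ℕ} (x : PairIdx ℓ n → ℝ) : Matrix (Fin ℓ) (Fin n) ℝ :=
  Matrix.of fun i j => x (Sum.inl (i, j))

/-- Second matrix `Q` of a pair `(E, Q)`. -/
def pQ {ℓ n : ℕ} (x : PairIdx ℓ n → ℝ) : Matrix (Fin ℓ) (Fin n) ℝ :=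
  Matrix.of fun i j => x (Sum.inr (i, j))

/-!
Full rank of `A` is the non-vanishing of `det (A * Aᵀ) + det (Aᵀ * A)`, a sum of two nonnegative
terms, hence a polynomial condition. Given `(E, Q)` with `EᵀQ = QᵀE`, there is a full-rank `Q'`
with `EᵀQ' = Q'ᵀE`: with `e` the map of `E`, take `e + g` where `g` has values in `(range e)ᗮ` and
restricts on `ker e` to a map of maximal rank; then `⟪e x, (e + g) y⟫ = ⟪e x, e y⟫` is symmetric.
The segment from `Q` to `Q'` stays in the reference set and the polynomial restricted to it is a
nonzero univariate polynomial, so `(E, Q)` is a limit of points of the reference set off the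
algebraic set. Swapping `E` and `Q` preserves the reference set and gives the second claim.
-/

open Module LinearMap

theorem exists_linearMap_injective_and_surjective_of_finrank {K M N : Type*} [Field K]
    [AddCommGroup M] [Module K M] [FiniteDimensional K M]
    [AddCommGroup N] [Module K N] [FiniteDimensional K N] :
    ∃ f : M →ₗ[K] N, (finrank K M ≤ finrank K N → Function.Injective f) ∧
      (finrank K N ≤ finrank K M → Function.Surjective f) := by
  rcases le_total (finrank K M) (finrank K N) with hle | hle
  · obtain ⟨f, hf⟩ := finrank_le_iff_exists_linearMap.mp hle
    exact ⟨f, fun _ ↦ hf, fun hge ↦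
      (injective_iff_surjective_of_finrank_eq_finrank (le_antisymm hle hge)).mp hf⟩
  · obtain ⟨g, hg⟩ := finrank_le_iff_exists_linearMap.mp hle
    obtain ⟨f, hfg⟩ := g.exists_leftInverse_of_injective (ker_eq_bot.mpr hg)
    have hf : Function.Surjective f := fun y ↦ ⟨g y, LinearMap.congr_fun hfg y⟩
    exact ⟨f, fun hge ↦
      (injective_iff_surjective_of_finrank_eq_finrank (le_antisymm hge hle)).mpr hf, fun _ ↦ hf⟩

section InnerProduct

variable {𝕜 : Type*} [RCLike 𝕜]

open scoped InnerProductSpace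

namespace LinearMap

variable {E F : Type*} [AddCommGroup E] [Module 𝕜 E] [NormedAddCommGroup F]
  [InnerProductSpace 𝕜 F] (e : E →ₗ[𝕜] F) (g : E →ₗ[𝕜] (range e)ᗮ)

theorem inner_add_orthogonal_comm (x y : E) :
    ⟪e x, (e + (range e)ᗮ.subtype ∘ₗ g) y⟫_𝕜 = ⟪(e + (range e)ᗮ.subtype ∘ₗ g) x, e y⟫_𝕜 := by
  have horth : ∀ u v, ⟪e u, (g v : F)⟫_𝕜 = 0 := fun u v ↦
    Submodule.inner_right_of_mem_orthogonal (mem_range_self e u) (g v).2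
  simp only [add_apply, comp_apply, Submodule.coe_subtype, inner_add_left, inner_add_right,
    horth, inner_eq_zero_symm.mp (horth _ _)]

theorem injective_add_orthogonal (hg : Function.Injective (g ∘ₗ (ker e).subtype)) :
    Function.Injective (e + (range e)ᗮ.subtype ∘ₗ g) := by
  rw [← ker_eq_bot, ker_eq_bot']
  intro x hx
  have hex : e x = 0 := by
    have hmem : e x ∈ range e ⊓ (range e)ᗮ := by
      refine ⟨mem_range_self e x, ?_⟩
      rw [eq_neg_of_add_eq_zero_left hx]
      exact (range e)ᗮ.neg_mem (g x).2
    simpa [Submodule.inf_orthogonal_eq_bot] using hmem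
  have hgx : g x = 0 := by simpa [hex] using hx
  have hx0 : (⟨x, hex⟩ : ker e) = 0 := hg (by simpa using hgx)
  simpa using congrArg Subtype.val hx0

theorem surjective_add_orthogonal [(range e).HasOrthogonalProjection]
    (hg : Function.Surjective (g ∘ₗ (ker e).subtype)) :
    Function.Surjective (e + (range e)ᗮ.subtype ∘ₗ g) := by
  intro w
  obtain ⟨a, ⟨u, rfl⟩, b, hb, rfl⟩ := (range e).exists_add_mem_mem_orthogonal w
  obtain ⟨k, hk⟩ := hg (⟨b, hb⟩ - g u)
  refine ⟨u + k, ?_⟩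
  have hgk : (g k : F) = b - g u := by simpa using congrArg Subtype.val hk
  simp [hgk]

theorem exists_finrank_range_eq_min_inner_comm [FiniteDimensional 𝕜 E] [FiniteDimensional 𝕜 F] :
    ∃ q : E →ₗ[𝕜] F, finrank 𝕜 (range q) = min (finrank 𝕜 E) (finrank 𝕜 F) ∧
      ∀ x y, ⟪e x, q y⟫_𝕜 = ⟪q x, e y⟫_𝕜 := by
  obtain ⟨h, hinj, hsurj⟩ :=
    exists_linearMap_injective_and_surjective_of_finrank (K := 𝕜) (M := ker e) (N := (range e)ᗮ)
  obtain ⟨g, rfl⟩ := h.exists_extend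
  have hdimE := e.finrank_range_add_finrank_ker
  have hdimF := (range e).finrank_add_finrank_orthogonal
  refine ⟨e + (range e)ᗮ.subtype ∘ₗ g, ?_, e.inner_add_orthogonal_comm g⟩
  rcases le_total (finrank 𝕜 E) (finrank 𝕜 F) with hle | hle
  · rw [min_eq_left hle, finrank_range_of_inj (e.injective_add_orthogonal g (hinj (by omega)))]
  · rw [min_eq_right hle, range_eq_top.mpr (e.surjective_add_orthogonal g (hsurj (by omega))),
      finrank_top]

end LinearMap

namespace Matrix

variable {m n : Type*} [Fintype m] [Fintype n] [DecidableEq n]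

theorem rank_eq_finrank_range_toEuclideanLin (A : Matrix m n 𝕜) :
    A.rank = finrank 𝕜 (range (toEuclideanLin A)) := by
  rw [rank_eq_finrank_range_toLin _ (EuclideanSpace.basisFun m 𝕜).toBasis
    (EuclideanSpace.basisFun n 𝕜).toBasis, toEuclideanLin_eq_toLin_orthonormal]

variable [DecidableEq m]

theorem conjTranspose_mul_eq_of_inner_comm {A B : Matrix m n 𝕜}
    (h : ∀ x y,
      ⟪toEuclideanLin A x, toEuclideanLin B y⟫_𝕜 = ⟪toEuclideanLin B x, toEuclideanLin A y⟫_𝕜) :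
    Aᴴ * B = Bᴴ * A := by
  apply toEuclideanLin.injective
  ext1 y
  refine ext_inner_left 𝕜 fun x ↦ ?_
  rw [toLpLin_mul 2 2 2, toLpLin_mul 2 2 2]
  simpa [toEuclideanLin_conjTranspose_eq_adjoint, adjoint_inner_right] using h x y

theorem exists_rank_eq_min_conjTranspose_mul_comm (A : Matrix m n 𝕜) :
    ∃ B : Matrix m n 𝕜, B.rank = min (Fintype.card m) (Fintype.card n) ∧ Aᴴ * B = Bᴴ * A := by
  obtain ⟨q, hrank, hcomm⟩ := (toEuclideanLin A).exists_finrank_range_eq_min_inner_comm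
  refine ⟨toEuclideanLin.symm q, ?_, conjTranspose_mul_eq_of_inner_comm ?_⟩
  · rw [rank_eq_finrank_range_toEuclideanLin, LinearEquiv.apply_symm_apply, hrank]
    simp [min_comm]
  · simpa using hcomm

end Matrix

end InnerProduct

namespace Matrix

variable {m n : Type*} [Fintype m] [Fintype n]

theorem isUnit_of_rank_eq_card [DecidableEq n] {K : Type*} [Field K] {A : Matrix n n K}
    (h : A.rank = Fintype.card n) : IsUnit A := by
  rw [← mulVec_injective_iff_isUnit]
  have hrange : range A.mulVecLin = ⊤ := Submodule.eq_top_of_finrank_eq (by simpa [rank] using h)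
  exact injective_iff_surjective.mpr (range_eq_top.mp hrange)

variable [DecidableEq m]

theorem det_mul_transpose_ne_zero_iff (A : Matrix m n ℝ) :
    (A * Aᵀ).det ≠ 0 ↔ A.rank = Fintype.card m := by
  rw [← rank_self_mul_transpose]
  exact ⟨rank_of_det_ne_zero,
    fun h ↦ ((isUnit_iff_isUnit_det _).mp (isUnit_of_rank_eq_card h)).ne_zero⟩

theorem det_mul_transpose_nonneg (A : Matrix m n ℝ) : 0 ≤ (A * Aᵀ).det := by
  simpa using (posSemidef_self_mul_conjTranspose A).det_nonneg

variable [DecidableEq n]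

def gramDetSum {R : Type*} [CommRing R] (A : Matrix m n R) : R :=
  (A * Aᵀ).det + (Aᵀ * A).det

theorem rank_eq_min_iff_gramDetSum_ne_zero (A : Matrix m n ℝ) :
    A.rank = min (Fintype.card m) (Fintype.card n) ↔ A.gramDetSum ≠ 0 := by
  have hT := det_mul_transpose_ne_zero_iff Aᵀ
  have hT_nonneg := det_mul_transpose_nonneg Aᵀ
  rw [transpose_transpose, rank_transpose] at hT
  rw [transpose_transpose] at hT_nonneg
  rw [gramDetSum, Ne, add_eq_zero_iff_of_nonneg (det_mul_transpose_nonneg A) hT_nonneg,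
    not_and_or, ← Ne, ← Ne, det_mul_transpose_ne_zero_iff, hT]
  have := A.rank_le_card_height
  have := A.rank_le_card_width
  omega

theorem _root_.RingHom.map_gramDetSum {R S : Type*} [CommRing R] [CommRing S] (f : R →+* S)
    (A : Matrix m n R) : f A.gramDetSum = (A.map f).gramDetSum := by
  simp only [gramDetSum, map_add, RingHom.map_det, RingHom.mapMatrix_apply, Matrix.map_mul,
    transpose_map]

end Matrix

theorem Matrix.transpose_mul_lineMap_comm {m n R : Type*} [Fintype m] [CommRing R]
    {A B C : Matrix m n R} (hB : Aᵀ * B = Bᵀ * A) (hC : Aᵀ * C = Cᵀ * A) (t : R) :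
    Aᵀ * AffineMap.lineMap B C t = (AffineMap.lineMap B C t)ᵀ * A := by
  simp only [AffineMap.lineMap_apply_module, Matrix.mul_add, Matrix.add_mul, Matrix.mul_smul,
    Matrix.smul_mul, transpose_add, transpose_smul, hB, hC]

theorem MvPolynomial.mem_closure_setOf_eval_ne_zero_inter {σ : Type*} (p : MvPolynomial σ ℝ)
    {S : Set (σ → ℝ)} {x y : σ → ℝ} (hy : eval y p ≠ 0)
    (hxy : ∀ t : ℝ, AffineMap.lineMap x y t ∈ S) :
    x ∈ closure ({z | eval z p ≠ 0} ∩ S) := by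
  set r : Polynomial ℝ :=
    aeval (fun i ↦ Polynomial.C (x i) + Polynomial.X * Polynomial.C (y i - x i)) p
  have hr : ∀ t, r.eval t = eval (AffineMap.lineMap x y t) p := by
    intro t
    have hcoord : (fun i ↦ Polynomial.aeval t
        (Polynomial.C (x i) + Polynomial.X * Polynomial.C (y i - x i))) =
        AffineMap.lineMap x y t := by
      ext i
      simp only [Polynomial.aeval_add, Polynomial.aeval_mul, Polynomial.aeval_C,
        Polynomial.aeval_X, AffineMap.lineMap_apply_module, Pi.add_apply, Pi.smul_apply,
        smul_eq_mul, Algebra.algebraMap_self, RingHom.id_apply]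
      ring
    rw [← Polynomial.coe_aeval_eq_eval, ← AlgHom.comp_apply, comp_aeval, hcoord]
    rfl
  have hr0 : r ≠ 0 := fun h ↦ hy (by simpa [h] using (hr 1).symm)
  have hdense : Dense {t | r.IsRoot t}ᶜ :=
    (Polynomial.finite_setOfPred_isRoot hr0).countable.dense_compl ℝ
  have hmaps : Set.MapsTo (AffineMap.lineMap x y) {t | r.IsRoot t}ᶜ ({z | eval z p ≠ 0} ∩ S) :=
    fun t ht ↦ ⟨by simpa [hr] using ht, hxy t⟩
  simpa using map_mem_closure AffineMap.lineMap_continuous (hdense 0) hmaps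

theorem relGeneric_of_forall_lineMap {ι : Type} [Fintype ι] {S V : Set (ι → ℝ)}
    (p : MvPolynomial ι ℝ) (hS : ∀ x ∈ V, MvPolynomial.eval x p ≠ 0 → x ∈ S)
    (hline : ∀ x ∈ V, ∃ y, MvPolynomial.eval y p ≠ 0 ∧ ∀ t : ℝ, AffineMap.lineMap x y t ∈ V) :
    RelGeneric S V := by
  refine ⟨{x | MvPolynomial.eval x p = 0}, ⟨1, fun _ ↦ p, by simp⟩,
    fun x hx ↦ ⟨not_not.mp fun hp ↦ hx.1 (hS x hx.2 hp), hx.2⟩, fun x hx ↦ ?_⟩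
  obtain ⟨y, hy, hxy⟩ := hline x hx
  exact p.mem_closure_setOf_eval_ne_zero_inter hy hxy

theorem RelGeneric.preimage_comp_equiv {ι ι' : Type} [Fintype ι] [Fintype ι'] (σ : ι' ≃ ι)
    {S V : Set (ι' → ℝ)} (h : RelGeneric S V) :
    RelGeneric ((· ∘ σ) ⁻¹' S) ((· ∘ σ) ⁻¹' V) := by
  obtain ⟨W, ⟨k, p, rfl⟩, hsub, hdense⟩ := h
  set φ := (LinearEquiv.funCongrLeft ℝ ℝ σ).toContinuousLinearEquiv
  have hφ : (· ∘ σ) = ⇑φ := rfl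
  rw [hφ]
  refine ⟨φ ⁻¹' {x | ∀ i, MvPolynomial.eval x (p i) = 0},
    ⟨k, fun i ↦ MvPolynomial.rename σ (p i), ?_⟩, fun x hx ↦ ⟨(hsub hx).1, hx.2⟩, ?_⟩
  · ext x
    simp [← hφ, MvPolynomial.eval_rename]
  · rw [← Set.preimage_compl, ← Set.preimage_inter, ← φ.preimage_closure]
    exact Set.preimage_mono hdense

section Pairs

variable {ℓ n : ℕ}

theorem pE_lineMap (x y : PairIdx ℓ n → ℝ) (t : ℝ) :
    pE (AffineMap.lineMap x y t) = AffineMap.lineMap (pE x) (pE y) t := by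
  ext
  simp [pE, AffineMap.lineMap_apply_module]

theorem pQ_lineMap (x y : PairIdx ℓ n → ℝ) (t : ℝ) :
    pQ (AffineMap.lineMap x y t) = AffineMap.lineMap (pQ x) (pQ y) t := by
  ext
  simp [pQ, AffineMap.lineMap_apply_module]

noncomputable def genericQ (ℓ n : ℕ) : Matrix (Fin ℓ) (Fin n) (MvPolynomial (PairIdx ℓ n) ℝ) :=
  Matrix.of fun i j ↦ MvPolynomial.X (Sum.inr (i, j))

theorem eval_genericQ_gramDetSum (x : PairIdx ℓ n → ℝ) :
    MvPolynomial.eval x (genericQ ℓ n).gramDetSum = (pQ x).gramDetSum := by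
  rw [RingHom.map_gramDetSum]
  congr 1
  ext
  simp [genericQ, pQ]

theorem relGeneric_rank_pQ_eq_min :
    RelGeneric {x : PairIdx ℓ n → ℝ | (pQ x).rank = min ℓ n}
      {x : PairIdx ℓ n → ℝ | (pE x)ᵀ * pQ x = (pQ x)ᵀ * pE x} := by
  have hfull : ∀ x : PairIdx ℓ n → ℝ,
      (pQ x).rank = min ℓ n ↔ MvPolynomial.eval x (genericQ ℓ n).gramDetSum ≠ 0 := fun x ↦ by
    simpa [eval_genericQ_gramDetSum] using (pQ x).rank_eq_min_iff_gramDetSum_ne_zero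
  refine relGeneric_of_forall_lineMap _ (fun x _ ↦ (hfull x).mpr) fun x hx ↦ ?_
  obtain ⟨Q', hrank, hcomm⟩ := (pE x).exists_rank_eq_min_conjTranspose_mul_comm
  simp only [conjTranspose_eq_transpose_of_trivial, Fintype.card_fin] at hrank hcomm
  let y : PairIdx ℓ n → ℝ := Sum.elim (fun p ↦ x (Sum.inl p)) (fun p ↦ Q' p.1 p.2)
  have hyE : pE y = pE x := rfl
  have hyQ : pQ y = Q' := rfl
  refine ⟨y, (hfull y).mp (hyQ ▸ hrank), fun t ↦ ?_⟩
  simp only [Set.mem_ofPred_eq, pE_lineMap, pQ_lineMap, hyE, hyQ, AffineMap.lineMap_same_apply]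
  exact transpose_mul_lineMap_comm hx hcomm t

end Pairs

theorem full_rank_relGeneric_in_symmetric_pairs_general (ℓ n : ℕ) :
    RelGeneric {x : PairIdx ℓ n → ℝ | (pQ x).rank = min ℓ n}
      {x : PairIdx ℓ n → ℝ | (pE x)ᵀ * pQ x = (pQ x)ᵀ * pE x} ∧
    RelGeneric {x : PairIdx ℓ n → ℝ | (pE x).rank = min ℓ n}
      {x : PairIdx ℓ n → ℝ | (pE x)ᵀ * pQ x = (pQ x)ᵀ * pE x} := by
  refine ⟨relGeneric_rank_pQ_eq_min, ?_⟩
  -- precomposing with `Sum.swap` exchanges `E` and `Q`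
  convert (relGeneric_rank_pQ_eq_min (ℓ := ℓ) (n := n)).preimage_comp_equiv (Equiv.sumComm _ _)
    using 2
  · rfl
  · ext x
    exact eq_comm

/-- both `{(E,Q) : rank Q = min ℓ n}` and
`{(E,Q) : rank E = min ℓ n}` are relative generic in
`{(E,Q) : EᵀQ = QᵀE}`. -/
theorem full_rank_relGeneric_in_symmetric_pairs (ℓ n : ℕ) (hℓ : 1 ≤ ℓ) (hn : 1 ≤ n) :
    RelGeneric {x : PairIdx ℓ n → ℝ | (pQ x).rank = min ℓ n}
      {x : PairIdx ℓ n → ℝ | (pE x)ᵀ * pQ x = (pQ x)ᵀ * pE x} ∧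
    RelGeneric {x : PairIdx ℓ n → ℝ | (pE x).rank = min ℓ n}
      {x : PairIdx ℓ n → ℝ | (pE x)ᵀ * pQ x = (pQ x)ᵀ * pE x} :=
  full_rank_relGeneric_in_symmetric_pairs_general ℓ n
end

section
/- Let ℓ, n ∈ ℕ, ℓ, n ≥ 1. The set S = {(E,Q) ∈ ℝ^{ℓ×n} × ℝ^{ℓ×n} : rank(EᵀQ) = min{ℓ,n}} is relative generic in V = {(E,Q) ∈ ℝ^{ℓ×n} × ℝ^{ℓ×n} : EᵀQ = QᵀE}. -/
open Matrix

/-!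
Let `m = min ℓ n`. The complement of `S` inside `V` lies in the algebraic set `W` where all
`m × m` minors of `EᵀQ` vanish. For density, take `(E, Q) ∈ V` and a matrix `G` of rank `m` with
`Gᵀ(E - Q)` symmetric: `G = (E - Q) + N`, where `N` maps `ker (E - Q)` with maximal rank into
`ker (E - Q)ᵀ`, the orthogonal complement of the range of `E - Q`. The whole line
`(E + tG, Q + tG)` then lies in `V`. Since `(E + tG)ᵀ(Q + tG) = t²(G + t⁻¹E)ᵀ(G + t⁻¹Q)`, for large
`t` a minor of it on which `GᵀG` does not vanish is nonzero. Restricted to the line, this minor is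
thus a nonzero polynomial in `t`, so the line meets `W` in finitely many points and `(E, Q)` is a
limit of points of `V \ W`.
-/

open Filter Topology

theorem exists_linearMap_surjective_of_finrank_le {K V W : Type*} [Field K] [AddCommGroup V]
    [Module K V] [AddCommGroup W] [Module K W] [FiniteDimensional K V] [FiniteDimensional K W]
    (h : Module.finrank K W ≤ Module.finrank K V) : ∃ f : V →ₗ[K] W, Function.Surjective f := by
  obtain ⟨g, hg⟩ := finrank_le_iff_exists_linearMap.mp h
  obtain ⟨f, hfg⟩ := g.exists_leftInverse_of_injective (LinearMap.ker_eq_bot.mpr hg)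
  exact ⟨f, fun w ↦ ⟨g w, LinearMap.congr_fun hfg w⟩⟩

namespace Matrix

section Field

variable {K : Type*} [Field K] {m n o : Type*} [Fintype n] [Fintype o] [DecidableEq o]

theorem det_submatrix_eq_zero_of_rank_lt (A : Matrix m n K) (r : o → m) (c : o → n)
    (h : A.rank < Fintype.card o) : (A.submatrix r c).det = 0 := by
  by_contra hdet
  exact (rank_of_det_ne_zero hdet ▸ rank_submatrix_le A r c).not_gt h

theorem exists_linearIndependent_col_comp_of_le_rank (A : Matrix m n K) {k : ℕ}
    (hk : k ≤ A.rank) : ∃ c : Fin k → n, LinearIndependent K (A.col ∘ c) := by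
  obtain ⟨κ, a, ha, hspan, hli⟩ := exists_linearIndependent' K A.col
  have : Fintype κ := Fintype.ofInjective a ha
  have hcard : Fintype.card κ = A.rank := by
    rw [rank_eq_finrank_span_cols, ← hspan, finrank_span_eq_card hli]
  let e : Fin A.rank ≃ κ := (Fintype.equivFinOfCardEq hcard).symm
  exact ⟨a ∘ e ∘ Fin.castLE hk, hli.comp _ (e.injective.comp (Fin.castLE_injective hk))⟩

theorem exists_det_submatrix_ne_zero_of_le_rank [Fintype m] (A : Matrix m n K) {k : ℕ}
    (hk : k ≤ A.rank) : ∃ (r : Fin k → m) (c : Fin k → n), (A.submatrix r c).det ≠ 0 := by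
  obtain ⟨r, hr⟩ := Aᵀ.exists_linearIndependent_col_comp_of_le_rank (k := k)
    (by rwa [rank_transpose])
  have hrank : (A.submatrix r id).rank = k := by
    simpa using LinearIndependent.rank_matrix (M := A.submatrix r id) hr
  obtain ⟨c, hc⟩ := (A.submatrix r id).exists_linearIndependent_col_comp_of_le_rank hrank.ge
  refine ⟨r, c, ?_⟩
  rw [← isUnit_iff_ne_zero, ← isUnit_iff_isUnit_det, ← linearIndependent_cols_iff_isUnit]
  exact hc

theorem rank_transpose_mul_le_min [Fintype m] (A B : Matrix m n K) :
    (Aᵀ * B).rank ≤ min (Fintype.card m) (Fintype.card n) :=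
  le_min ((rank_mul_le_left _ _).trans (rank_le_card_width _)) (rank_le_card_height _)

theorem finrank_ker_mulVecLin_add_rank (M : Matrix m n K) :
    Module.finrank K (LinearMap.ker M.mulVecLin) + M.rank = Fintype.card n := by
  rw [add_comm, rank, LinearMap.finrank_range_add_finrank_ker, Module.finrank_fintype_fun_eq_card]

theorem transpose_toMatrix'_add_mul_comm [Fintype m] [DecidableEq n] {M : Matrix m n K}
    {N : (n → K) →ₗ[K] m → K} (hN : LinearMap.range N ≤ LinearMap.ker Mᵀ.mulVecLin) :
    (LinearMap.toMatrix' (M.mulVecLin + N))ᵀ * M = Mᵀ * LinearMap.toMatrix' (M.mulVecLin + N) := by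
  classical
  have hMG : Mᵀ * LinearMap.toMatrix' (M.mulVecLin + N) = Mᵀ * M := by
    apply Matrix.toLin'.injective
    rw [toLin'_mul, toLin'_mul, toLin'_toMatrix', toLin'_apply', LinearMap.comp_add,
      LinearMap.range_le_ker_iff.1 hN, add_zero, toLin'_apply']
  rw [← transpose_transpose M, ← transpose_mul, transpose_transpose, hMG, transpose_mul,
    transpose_transpose]

end Field

section OrderedField

open LinearMap

variable {K : Type*} [Field K] [LinearOrder K] [IsStrictOrderedRing K] {m n : Type*}
  [Fintype m] [Fintype n]

theorem isCompl_range_mulVecLin_ker_transpose (M : Matrix m n K) :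
    IsCompl (range M.mulVecLin) (ker Mᵀ.mulVecLin) := by
  refine (Submodule.isCompl_iff_disjoint _ _ ?_).2 ?_
  · have := Mᵀ.finrank_ker_mulVecLin_add_rank
    rw [rank_transpose] at this
    rw [Module.finrank_fintype_fun_eq_card, ← this, ← rank]
    omega
  · rw [Submodule.disjoint_def]
    rintro _ ⟨x, rfl⟩ hx
    rw [LinearMap.mem_ker, mulVecLin_apply, mulVecLin_apply] at hx
    rw [mulVecLin_apply, ← dotProduct_self_eq_zero, dotProduct_mulVec, ← mulVec_transpose, hx,
      zero_dotProduct]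

section

variable {M : Matrix m n K} {N : (n → K) →ₗ[K] m → K}

theorem injective_mulVecLin_add (hN : range N ≤ ker Mᵀ.mulVecLin)
    (hinj : Disjoint (ker M.mulVecLin) (ker N)) : Function.Injective (M.mulVecLin + N) := by
  rw [← LinearMap.ker_eq_bot, Submodule.eq_bot_iff]
  intro x hx
  rw [LinearMap.mem_ker, LinearMap.add_apply, add_eq_zero_iff_eq_neg] at hx
  have hMx : M.mulVecLin x = 0 :=
    Submodule.disjoint_def.1 M.isCompl_range_mulVecLin_ker_transpose.disjoint _ ⟨x, rfl⟩
      (hx ▸ neg_mem (hN ⟨x, rfl⟩))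
  have hNx : N x = 0 := by rw [hMx, zero_eq_neg] at hx; exact hx
  exact Submodule.disjoint_def.1 hinj x hMx hNx

theorem surjective_mulVecLin_add (hN : range N ≤ ker Mᵀ.mulVecLin)
    (hsurj : ker Mᵀ.mulVecLin ≤ (ker M.mulVecLin).map N) :
    Function.Surjective (M.mulVecLin + N) := by
  have hker : ker Mᵀ.mulVecLin ≤ range (M.mulVecLin + N) := by
    refine hsurj.trans ?_
    rintro _ ⟨u, hu, rfl⟩
    exact ⟨u, by rw [LinearMap.add_apply, LinearMap.mem_ker.1 hu, zero_add]⟩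
  have hrange : range M.mulVecLin ≤ range (M.mulVecLin + N) := by
    rintro _ ⟨x, rfl⟩
    rw [← add_sub_cancel_right (M.mulVecLin x) (N x), ← LinearMap.add_apply]
    exact sub_mem ⟨x, rfl⟩ (hker (hN ⟨x, rfl⟩))
  rw [← LinearMap.range_eq_top, eq_top_iff, ← M.isCompl_range_mulVecLin_ker_transpose.sup_eq_top]
  exact sup_le hrange hker

end

theorem exists_transpose_mul_comm_rank_eq_min (M : Matrix m n K) :
    ∃ G : Matrix m n K, Gᵀ * M = Mᵀ * G ∧ G.rank = min (Fintype.card m) (Fintype.card n) := by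
  classical
  set U := ker M.mulVecLin
  set V := ker Mᵀ.mulVecLin
  have hU : Module.finrank K U + M.rank = Fintype.card n := M.finrank_ker_mulVecLin_add_rank
  have hV : Module.finrank K V + M.rank = Fintype.card m :=
    M.rank_transpose ▸ Mᵀ.finrank_ker_mulVecLin_add_rank
  have hext (J : U →ₗ[K] V) : ∃ N : (n → K) →ₗ[K] m → K, range N ≤ V ∧ ∀ u : U, N u = J u := by
    obtain ⟨g, hg⟩ := LinearMap.exists_extend J
    exact ⟨V.subtype ∘ₗ g, (range_comp_le_range _ _).trans V.range_subtype.le,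
      fun u ↦ by simp [← hg]⟩
  rcases le_total (Fintype.card n) (Fintype.card m) with hnm | hmn
  · obtain ⟨J, hJ⟩ := finrank_le_iff_exists_linearMap.mp
      (show Module.finrank K U ≤ Module.finrank K V by omega)
    obtain ⟨N, hNV, hNJ⟩ := hext J
    have hdisj : Disjoint U (ker N) := by
      rw [Submodule.disjoint_def]
      intro x hxU hxN
      have := @hJ ⟨x, hxU⟩ 0 (Subtype.ext (by simpa [← hNJ] using hxN))
      simpa using congrArg Subtype.val this
    refine ⟨toMatrix' (M.mulVecLin + N), transpose_toMatrix'_add_mul_comm hNV, ?_⟩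
    rw [min_eq_right hnm, rank, ← toLin'_apply', toLin'_toMatrix',
      finrank_range_of_inj (injective_mulVecLin_add hNV hdisj),
      Module.finrank_fintype_fun_eq_card]
  · obtain ⟨J, hJ⟩ := exists_linearMap_surjective_of_finrank_le (K := K) (V := U) (W := V)
      (by omega)
    obtain ⟨N, hNV, hNJ⟩ := hext J
    have hmap : V ≤ U.map N := fun v hv ↦ by
      obtain ⟨u, hu⟩ := hJ ⟨v, hv⟩
      exact ⟨u, u.2, by rw [hNJ, hu]⟩
    refine ⟨toMatrix' (M.mulVecLin + N), transpose_toMatrix'_add_mul_comm hNV, ?_⟩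
    rw [min_eq_left hmn, rank, ← toLin'_apply', toLin'_toMatrix',
      range_eq_top.2 (surjective_mulVecLin_add hNV hmap), finrank_top,
      Module.finrank_fintype_fun_eq_card]

end OrderedField

variable {m n o : Type*} [Fintype m] [Fintype o] [DecidableEq o]

theorem transpose_add_smul_mul_add_smul_comm {K : Type*} [CommRing K] {E Q G : Matrix m n K}
    (hEQ : Eᵀ * Q = Qᵀ * E) (hG : Gᵀ * (E - Q) = (E - Q)ᵀ * G) (t : K) :
    (E + t • G)ᵀ * (Q + t • G) = (Q + t • G)ᵀ * (E + t • G) := by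
  simp only [transpose_add, transpose_smul, transpose_sub, Matrix.add_mul, Matrix.mul_add,
    Matrix.sub_mul, Matrix.mul_sub, Matrix.smul_mul, Matrix.mul_smul] at hG ⊢
  linear_combination (norm := module) hEQ - t • hG

theorem exists_det_submatrix_transpose_add_smul_mul_ne_zero (E Q G : Matrix m n ℝ)
    (r c : o → n) (h : ((Gᵀ * G).submatrix r c).det ≠ 0) :
    ∃ t : ℝ, (((E + t • G)ᵀ * (Q + t • G)).submatrix r c).det ≠ 0 := by
  let φ (u : ℝ) := (((G + u • E)ᵀ * (G + u • Q)).submatrix r c).det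
  have hφ : Continuous φ := by fun_prop
  have h0 : φ 0 ≠ 0 := by simpa [φ] using h
  obtain ⟨u, hu, hu0⟩ := ((hφ.continuousAt.eventually_ne h0).filter_mono nhdsWithin_le_nhds
    |>.and self_mem_nhdsWithin).exists (f := 𝓝[≠] (0 : ℝ))
  have hu0 : u ≠ 0 := hu0
  have hscale (A : Matrix m n ℝ) : A + u⁻¹ • G = u⁻¹ • (G + u • A) := by
    rw [smul_add, smul_smul, inv_mul_cancel₀ hu0, one_smul, add_comm]
  have hprod : ((E + u⁻¹ • G)ᵀ * (Q + u⁻¹ • G)).submatrix r c =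
      (u⁻¹ * u⁻¹) • ((G + u • E)ᵀ * (G + u • Q)).submatrix r c := by
    rw [hscale, hscale, transpose_smul, Matrix.smul_mul, Matrix.mul_smul, smul_smul]
    rfl
  refine ⟨u⁻¹, ?_⟩
  rw [hprod, det_smul]
  exact mul_ne_zero (pow_ne_zero _ (by positivity)) hu

end Matrix

namespace MvPolynomial

variable {ι : Type*}

theorem eventually_eval_add_smul_ne_zero (P : MvPolynomial ι ℝ) (x g : ι → ℝ)
    (h : ∃ t : ℝ, eval (x + t • g) P ≠ 0) : ∀ᶠ t in 𝓝[≠] (0 : ℝ), eval (x + t • g) P ≠ 0 := by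
  set p : Polynomial ℝ := eval₂ Polynomial.C (fun i ↦ .C (x i) + .C (g i) * .X) P
  have hp (t : ℝ) : p.eval t = eval (x + t • g) P := by
    rw [polynomial_eval_eval₂,
      show (Polynomial.evalRingHom t).comp Polynomial.C = RingHom.id ℝ by ext; simp, eval₂_id]
    congr 2 with i
    rw [Polynomial.eval_add, Polynomial.eval_mul, Polynomial.eval_C, Polynomial.eval_C,
      Polynomial.eval_X, Pi.add_apply, Pi.smul_apply, smul_eq_mul, mul_comm]
  obtain ⟨t₀, ht₀⟩ := h
  have hp0 : p ≠ 0 := fun h0 ↦ ht₀ (by rw [← hp, h0, Polynomial.eval_zero])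
  filter_upwards [nhdsNE_le_cofinite 0
    (Polynomial.finite_setOfPred_isRoot hp0).eventually_cofinite_notMem] with t ht
  rwa [← hp]

theorem mem_closure_setOf_eval_ne_zero_inter_s6 {V : Set (ι → ℝ)} (P : MvPolynomial ι ℝ)
    (x g : ι → ℝ) (hV : ∀ t : ℝ, x + t • g ∈ V) (h : ∃ t : ℝ, eval (x + t • g) P ≠ 0) :
    x ∈ closure ({y | eval y P ≠ 0} ∩ V) := by
  have hline : Tendsto (fun t : ℝ ↦ x + t • g) (𝓝[≠] 0) (𝓝 x) := by
    have : Continuous (fun t : ℝ ↦ x + t • g) := by fun_prop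
    simpa using (this.tendsto 0).mono_left nhdsWithin_le_nhds
  exact mem_closure_of_tendsto hline
    ((P.eventually_eval_add_smul_ne_zero x g h).mono fun t ht ↦ ⟨ht, hV t⟩)

end MvPolynomial

open MvPolynomial

theorem isAlgebraicSet_setOf_forall_eval_eq_zero {ι κ : Type} [Fintype ι] [Fintype κ]
    (p : κ → MvPolynomial ι ℝ) : IsAlgebraicSet {x : ι → ℝ | ∀ i, eval x (p i) = 0} :=
  ⟨Fintype.card κ, p ∘ (Fintype.equivFin κ).symm,
    Set.ext fun _ ↦ (Fintype.equivFin κ).symm.forall_congr_right.symm⟩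

section Pairs

variable {ℓ n : ℕ}

def pairOf (E Q : Matrix (Fin ℓ) (Fin n) ℝ) : PairIdx ℓ n → ℝ :=
  Sum.elim (fun ij ↦ E ij.1 ij.2) (fun ij ↦ Q ij.1 ij.2)

theorem pE_add_smul_pairOf (x : PairIdx ℓ n → ℝ) (t : ℝ) (E Q : Matrix (Fin ℓ) (Fin n) ℝ) :
    pE (x + t • pairOf E Q) = pE x + t • E := by
  ext i j; rfl

theorem pQ_add_smul_pairOf (x : PairIdx ℓ n → ℝ) (t : ℝ) (E Q : Matrix (Fin ℓ) (Fin n) ℝ) :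
    pQ (x + t • pairOf E Q) = pQ x + t • Q := by
  ext i j; rfl

variable (ℓ n) in
noncomputable def transposeMulPoly : Matrix (Fin n) (Fin n) (MvPolynomial (PairIdx ℓ n) ℝ) :=
  Matrix.of fun i j ↦ ∑ a, X (Sum.inl (a, i)) * X (Sum.inr (a, j))

theorem eval_det_submatrix_transposeMulPoly {k : ℕ} (x : PairIdx ℓ n → ℝ) (r c : Fin k → Fin n) :
    eval x ((transposeMulPoly ℓ n).submatrix r c).det = (((pE x)ᵀ * pQ x).submatrix r c).det := by
  rw [RingHom.map_det, RingHom.mapMatrix_apply, ← submatrix_map]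
  congr 2
  ext i j
  simp [transposeMulPoly, Matrix.mul_apply, pE, pQ]

end Pairs

theorem rank_EtQ_relGeneric_in_symmetric_pairs_general (ℓ n : ℕ) :
    RelGeneric {x : PairIdx ℓ n → ℝ | ((pE x)ᵀ * pQ x).rank = min ℓ n}
      {x : PairIdx ℓ n → ℝ | (pE x)ᵀ * pQ x = (pQ x)ᵀ * pE x} := by
  set m := min ℓ n
  let minor (rc : (Fin m → Fin n) × (Fin m → Fin n)) :=
    ((transposeMulPoly ℓ n).submatrix rc.1 rc.2).det
  let W := {x | ∀ rc, eval x (minor rc) = 0}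
  refine ⟨W, isAlgebraicSet_setOf_forall_eval_eq_zero minor, ?_, ?_⟩
  · rintro x ⟨hxS, hxV⟩
    have hle := rank_transpose_mul_le_min (pE x) (pQ x)
    rw [Fintype.card_fin, Fintype.card_fin] at hle
    have hlt : ((pE x)ᵀ * pQ x).rank < m := lt_of_le_of_ne hle hxS
    refine ⟨fun rc ↦ ?_, hxV⟩
    rw [eval_det_submatrix_transposeMulPoly]
    exact det_submatrix_eq_zero_of_rank_lt _ _ _ (by simpa using hlt)
  · intro x hxV
    obtain ⟨G, hGsymm, hGrank⟩ := exists_transpose_mul_comm_rank_eq_min (pE x - pQ x)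
    obtain ⟨r, c, hrc⟩ := (Gᵀ * G).exists_det_submatrix_ne_zero_of_le_rank (k := m)
      (by simp [rank_transpose_mul_self, hGrank, m])
    have hWc : {y | eval y (minor (r, c)) ≠ 0} ⊆ Wᶜ := fun y hy hW ↦ hy (hW (r, c))
    refine closure_mono (Set.inter_subset_inter_left _ hWc)
      (mem_closure_setOf_eval_ne_zero_inter_s6 (minor (r, c)) x (pairOf G G) (fun t ↦ ?_) ?_)
    · simp only [Set.mem_ofPred_eq, pE_add_smul_pairOf, pQ_add_smul_pairOf]
      exact transpose_add_smul_mul_add_smul_comm hxV hGsymm t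
    · simpa only [minor, eval_det_submatrix_transposeMulPoly, pE_add_smul_pairOf,
        pQ_add_smul_pairOf] using
        exists_det_submatrix_transpose_add_smul_mul_ne_zero (pE x) (pQ x) G r c hrc

/-- `{(E,Q) : rank (EᵀQ) = min ℓ n}` is relative generic in
`{(E,Q) : EᵀQ = QᵀE}`. -/
theorem rank_EtQ_relGeneric_in_symmetric_pairs (ℓ n : ℕ) (hℓ : 1 ≤ ℓ) (hn : 1 ≤ n) :
    RelGeneric {x : PairIdx ℓ n → ℝ | ((pE x)ᵀ * pQ x).rank = min ℓ n}
      {x : PairIdx ℓ n → ℝ | (pE x)ᵀ * pQ x = (pQ x)ᵀ * pE x} :=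
  rank_EtQ_relGeneric_in_symmetric_pairs_general ℓ n
end

section
/- Let ℓ, n ∈ ℕ, ℓ, n ≥ 1, and let Q ∈ ℝ^{ℓ×n} be fixed. The set S = {E ∈ ℝ^{ℓ×n} : rank E = min{ℓ,n}} is relative generic in V_Q = {E ∈ ℝ^{ℓ×n} : EᵀQ = QᵀE and EᵀQ is positive semidefinite}. -/
open Matrix

/-- The matrix associated to a point of `ℝ^{ℓ×n}` (identification via entries). -/
def toMat {ℓ n : ℕ} (x : Fin ℓ × Fin n → ℝ) : Matrix (Fin ℓ) (Fin n) ℝ :=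
  Matrix.of fun i j => x (i, j)

/-!
The set `V` is convex, and `φ E = det (E Eᵀ) ^ 2 + det (Eᵀ E) ^ 2` is a polynomial in the entries
of `E` that vanishes exactly where `rank E < min ℓ n`. Once `V` contains one matrix `E₀` of full
rank, for every `E ∈ V` the restriction of `φ` to the segment from `E` to `E₀` is a nonzero
polynomial in one variable, so the points of that segment near `E` lie in `V` and off the zero set
of `φ`.
-/

open Module

namespace Matrix

variable {K : Type*} [Field K] {m n : Type*} [Fintype m] [Fintype n]

theorem det_ne_zero_iff_rank_eq [DecidableEq m] (M : Matrix m m K) :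
    M.det ≠ 0 ↔ M.rank = Fintype.card m := by
  refine ⟨rank_of_det_ne_zero, fun h => ?_⟩
  rw [rank_eq_finrank_span_row, ← Set.finrank, eq_comm,
    ← linearIndependent_iff_card_eq_finrank_span, linearIndependent_rows_iff_isUnit,
    isUnit_iff_isUnit_det] at h
  exact h.ne_zero

theorem exists_mul_eq_zero_rank_eq {d : ℕ} (A : Matrix m n K)
    (hd : d + A.rank ≤ Fintype.card m) : ∃ U : Matrix (Fin d) m K, U * A = 0 ∧ U.rank = d := by
  have hker : d ≤ finrank K (LinearMap.ker A.vecMulLinear) := by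
    have := LinearMap.finrank_range_add_finrank_ker A.vecMulLinear
    rw [range_vecMulLinear, ← rank_eq_finrank_span_row, finrank_fintype_fun_eq_card] at this
    omega
  let b := finBasis K (LinearMap.ker A.vecMulLinear)
  refine ⟨of fun i => b (Fin.castLE hker i), ?_, ?_⟩
  · ext i j
    rw [mul_apply_eq_vecMul]
    exact congrFun (b (Fin.castLE hker i)).2 j
  · have hli : LinearIndependent K fun i => (b (Fin.castLE hker i) : m → K) :=
      ((LinearIndependent.map' b.linearIndependent _
        (Submodule.ker_subtype (LinearMap.ker A.vecMulLinear))).comp _ (Fin.castLE_injective hker))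
    exact (LinearIndependent.rank_matrix (M := of fun i => (b (Fin.castLE hker i) : m → K))
      hli).trans (Fintype.card_fin d)

variable [LinearOrder K] [IsStrictOrderedRing K]

theorem rank_eq_min_iff [DecidableEq m] [DecidableEq n] (E : Matrix m n K) :
    E.rank = min (Fintype.card m) (Fintype.card n) ↔
      (E * Eᵀ).det ≠ 0 ∨ (Eᵀ * E).det ≠ 0 := by
  rw [det_ne_zero_iff_rank_eq, det_ne_zero_iff_rank_eq, rank_self_mul_transpose,
    rank_transpose_mul_self]
  have := E.rank_le_card_height
  have := E.rank_le_card_width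
  omega

theorem rank_transpose_mul_of_rank_eq {k : Type*} [Fintype k] [DecidableEq k]
    {U : Matrix k m K} {W : Matrix k n K} (hU : U.rank = Fintype.card k)
    (hW : W.rank = Fintype.card k) : (Uᵀ * W).rank = Fintype.card k := by
  refine le_antisymm ((rank_mul_le_left _ _).trans (rank_transpose U ▸ hU.le)) ?_
  have hUU : (U * Uᵀ).det ≠ 0 :=
    (det_ne_zero_iff_rank_eq _).mpr (by rw [rank_self_mul_transpose, hU])
  have hWW : (W * Wᵀ).det ≠ 0 :=
    (det_ne_zero_iff_rank_eq _).mpr (by rw [rank_self_mul_transpose, hW])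
  calc Fintype.card k = (U * Uᵀ * (W * Wᵀ)).rank :=
        (rank_of_det_ne_zero (by rw [det_mul]; exact mul_ne_zero hUU hWW)).symm
    _ = (U * (Uᵀ * W) * Wᵀ).rank := by simp only [Matrix.mul_assoc]
    _ ≤ (Uᵀ * W).rank := (rank_mul_le_left _ _).trans (rank_mul_le_right _ _)

theorem disjoint_range_mulVecLin_of_transpose_mul_eq_zero {l : Type*} [Fintype l]
    {A : Matrix m n K} {B : Matrix m l K} (h : Aᵀ * B = 0) :
    Disjoint (LinearMap.range A.mulVecLin) (LinearMap.range B.mulVecLin) := by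
  rw [Submodule.disjoint_def]
  rintro _ ⟨a, rfl⟩ ⟨b, hb⟩
  rw [mulVecLin_apply, mulVecLin_apply] at *
  refine dotProduct_self_eq_zero.mp ?_
  calc A *ᵥ a ⬝ᵥ A *ᵥ a = A *ᵥ a ⬝ᵥ B *ᵥ b := by rw [hb]
    _ = a ⬝ᵥ (Aᵀ * B) *ᵥ b := by rw [← mulVec_mulVec, dotProduct_mulVec a, vecMul_transpose]
    _ = 0 := by rw [h, zero_mulVec, dotProduct_zero]

theorem rank_add_rank_le_rank_add_of_orthogonal {A B : Matrix m n K} (h₁ : Aᵀ * B = 0)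
    (h₂ : A * Bᵀ = 0) : A.rank + B.rank ≤ (A + B).rank := by
  have hA : (A + B) * Aᵀ = A * Aᵀ := by
    rw [Matrix.add_mul, ← transpose_transpose B, ← transpose_mul, h₂, transpose_zero, add_zero]
  have hB : (A + B) * Bᵀ = B * Bᵀ := by rw [Matrix.add_mul, h₂, zero_add]
  have range_le (M : Matrix m n K) (N : Matrix n m K) :
      LinearMap.range (M * N).mulVecLin ≤ LinearMap.range M.mulVecLin := by
    rw [mulVecLin_mul]
    exact LinearMap.range_comp_le_range _ _
  have hdisj : LinearMap.range (A * Aᵀ).mulVecLin ⊓ LinearMap.range (B * Bᵀ).mulVecLin = ⊥ :=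
    ((disjoint_range_mulVecLin_of_transpose_mul_eq_zero h₁).mono (range_le _ _)
      (range_le _ _)).eq_bot
  have hsup := Submodule.finrank_sup_add_finrank_inf_eq (LinearMap.range (A * Aᵀ).mulVecLin)
    (LinearMap.range (B * Bᵀ).mulVecLin)
  rw [hdisj, finrank_bot, add_zero] at hsup
  have hle : LinearMap.range (A * Aᵀ).mulVecLin ⊔ LinearMap.range (B * Bᵀ).mulVecLin ≤
      LinearMap.range (A + B).mulVecLin := by
    rw [← hA, ← hB]
    exact sup_le (range_le _ _) (range_le _ _)
  rw [← rank_self_mul_transpose A, ← rank_self_mul_transpose B, rank, rank, rank, ← hsup]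
  exact Submodule.finrank_mono hle

/-- The witness is `Q + Uᵀ W`, where the `d = min - rank Q` rows of `U` and of `W` are independent
vectors in the left and right kernels of `Q`; the two summands have orthogonal row and column
spaces, so their ranks add up. -/
theorem exists_rank_eq_min_transpose_mul_eq (Q : Matrix m n K) :
    ∃ E : Matrix m n K, E.rank = min (Fintype.card m) (Fintype.card n) ∧ Eᵀ * Q = Qᵀ * Q := by
  set d := min (Fintype.card m) (Fintype.card n) - Q.rank
  have hQm := Q.rank_le_card_height
  have hQn := Q.rank_le_card_width
  obtain ⟨U, hUQ, hU⟩ := exists_mul_eq_zero_rank_eq (d := d) Q (by omega)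
  obtain ⟨W, hWQ, hW⟩ := exists_mul_eq_zero_rank_eq (d := d) Qᵀ (by rw [rank_transpose]; omega)
  have hN := rank_transpose_mul_of_rank_eq (hU.trans (Fintype.card_fin d).symm)
    (hW.trans (Fintype.card_fin d).symm)
  have h₁ : Qᵀ * (Uᵀ * W) = 0 := by
    rw [← Matrix.mul_assoc, ← transpose_mul, hUQ, transpose_zero, Matrix.zero_mul]
  have h₂ : Q * (Uᵀ * W)ᵀ = 0 := by
    have hQW : Q * Wᵀ = 0 := by simpa using congrArg transpose hWQ
    rw [transpose_mul, transpose_transpose, ← Matrix.mul_assoc, hQW, Matrix.zero_mul]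
  refine ⟨Q + Uᵀ * W, le_antisymm ?_ ?_, ?_⟩
  · exact le_min (rank_le_card_height _) (rank_le_card_width _)
  · have := rank_add_rank_le_rank_add_of_orthogonal h₁ h₂
    rw [hN, Fintype.card_fin] at this
    omega
  · have h₁' : (Uᵀ * W)ᵀ * Q = 0 := by simpa using congrArg transpose h₁
    rw [transpose_add, Matrix.add_mul, h₁', add_zero]

end Matrix

theorem Matrix.exists_rank_eq_min_transpose_mul_posSemidef {m n : Type*} [Fintype m]
    [Fintype n] (Q : Matrix m n ℝ) :
    ∃ E : Matrix m n ℝ, E.rank = min (Fintype.card m) (Fintype.card n) ∧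
      Eᵀ * Q = Qᵀ * E ∧ (Eᵀ * Q).PosSemidef := by
  obtain ⟨E, hrank, hEQ⟩ := exists_rank_eq_min_transpose_mul_eq Q
  have hQE : Qᵀ * E = Qᵀ * Q := by simpa using congrArg transpose hEQ
  refine ⟨E, hrank, hEQ.trans hQE.symm, hEQ ▸ ?_⟩
  simpa using posSemidef_conjTranspose_mul_self Q

theorem Matrix.convex_setOf_transpose_mul_posSemidef {m n : Type*} [Fintype m] [Fintype n]
    (Q : Matrix m n ℝ) :
    Convex ℝ {E : Matrix m n ℝ | Eᵀ * Q = Qᵀ * E ∧ (Eᵀ * Q).PosSemidef} := by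
  intro E hE F hF a b ha hb _
  have hl : (a • E + b • F)ᵀ * Q = a • (Eᵀ * Q) + b • (Fᵀ * Q) := by
    rw [transpose_add, transpose_smul, transpose_smul, Matrix.add_mul, smul_mul, smul_mul]
  have hr : Qᵀ * (a • E + b • F) = a • (Qᵀ * E) + b • (Qᵀ * F) := by
    rw [Matrix.mul_add, Matrix.mul_smul, Matrix.mul_smul]
  refine ⟨by rw [hl, hr, hE.1, hF.1], hl ▸ (hE.2.smul ha).add (hF.2.smul hb)⟩

theorem MvPolynomial.finite_setOf_eval_add_smul_sub_eq_zero {K ι : Type*} [CommRing K]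
    [IsDomain K] (P : MvPolynomial ι K) {x y : ι → K} (hy : eval y P ≠ 0) :
    {t : K | eval (x + t • (y - x)) P = 0}.Finite := by
  let p : Polynomial K :=
    aeval (fun i => Polynomial.C (x i) + Polynomial.X * Polynomial.C (y i - x i)) P
  have hp (t : K) : p.eval t = eval (x + t • (y - x)) P := by
    simp only [p, ← Polynomial.coe_evalRingHom, aeval_def, eval₂_comp_left]
    congr 1
    · ext; simp
    · ext; simp
  have hp0 : p ≠ 0 := fun h => hy (by simpa [h] using (hp 1).symm)
  simpa only [Polynomial.IsRoot.def, hp] using Polynomial.finite_setOfPred_isRoot hp0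

open Filter Topology in
theorem Convex.subset_closure_inter_setOf_eval_ne_zero {ι : Type*} {V : Set (ι → ℝ)}
    (hV : Convex ℝ V) (P : MvPolynomial ι ℝ) {y : ι → ℝ} (hy : y ∈ V)
    (hPy : MvPolynomial.eval y P ≠ 0) :
    V ⊆ closure ({x | MvPolynomial.eval x P ≠ 0} ∩ V) := by
  intro x hx
  have hγ : Tendsto (fun t : ℝ => x + t • (y - x)) (𝓝[>] 0) (𝓝 x) := by
    have : Continuous fun t : ℝ => x + t • (y - x) := by fun_prop
    simpa using (this.tendsto 0).mono_left nhdsWithin_le_nhds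
  refine mem_closure_of_tendsto hγ ?_
  have hroots : ∀ᶠ t in 𝓝[>] (0 : ℝ), MvPolynomial.eval (x + t • (y - x)) P ≠ 0 :=
    nhdsGT_le_nhdsNE 0 <| nhdsNE_le_cofinite 0 <|
      (MvPolynomial.finite_setOf_eval_add_smul_sub_eq_zero P hPy).eventually_cofinite_notMem
  filter_upwards [hroots, Ioo_mem_nhdsGT zero_lt_one] with t hPt ht
  exact ⟨hPt, hV.add_smul_sub_mem hx hy ⟨ht.1.le, ht.2.le⟩⟩

noncomputable def fullRankPoly (ℓ n : ℕ) : MvPolynomial (Fin ℓ × Fin n) ℝ :=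
  let Y : Matrix (Fin ℓ) (Fin n) (MvPolynomial (Fin ℓ × Fin n) ℝ) :=
    of fun i j => MvPolynomial.X (i, j)
  (Y * Yᵀ).det ^ 2 + (Yᵀ * Y).det ^ 2

theorem eval_fullRankPoly {ℓ n : ℕ} (x : Fin ℓ × Fin n → ℝ) :
    MvPolynomial.eval x (fullRankPoly ℓ n) =
      (toMat x * (toMat x)ᵀ).det ^ 2 + ((toMat x)ᵀ * toMat x).det ^ 2 := by
  have hmap : (of fun i j => MvPolynomial.X (i, j)).map (MvPolynomial.eval x) = toMat x := by
    ext i j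
    simp [toMat]
  simp only [fullRankPoly, map_add, map_pow, RingHom.map_det, RingHom.mapMatrix_apply,
    Matrix.map_mul, transpose_map, hmap]

theorem eval_fullRankPoly_ne_zero_iff {ℓ n : ℕ} (x : Fin ℓ × Fin n → ℝ) :
    MvPolynomial.eval x (fullRankPoly ℓ n) ≠ 0 ↔ (toMat x).rank = min ℓ n := by
  rw [eval_fullRankPoly, Ne, add_eq_zero_iff_of_nonneg (sq_nonneg _) (sq_nonneg _),
    sq_eq_zero_iff, sq_eq_zero_iff, not_and_or, ← rank_eq_min_iff, Fintype.card_fin,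
    Fintype.card_fin]

theorem full_rank_relGeneric_in_VQ_general (ℓ n : ℕ)
    (Q : Matrix (Fin ℓ) (Fin n) ℝ) :
    RelGeneric {x : Fin ℓ × Fin n → ℝ | (toMat x).rank = min ℓ n}
      {x : Fin ℓ × Fin n → ℝ |
        (toMat x)ᵀ * Q = Qᵀ * toMat x ∧ ((toMat x)ᵀ * Q).PosSemidef} := by
  obtain ⟨E₀, hrank, hE₀⟩ := exists_rank_eq_min_transpose_mul_posSemidef Q
  have hx₀ : toMat (fun p => E₀ p.1 p.2) = E₀ := rfl
  have hV := (convex_setOf_transpose_mul_posSemidef Q).is_linear_preimage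
    (f := toMat) ⟨fun _ _ => rfl, fun _ _ => rfl⟩
  refine ⟨{x | MvPolynomial.eval x (fullRankPoly ℓ n) = 0},
    ⟨1, fun _ => fullRankPoly ℓ n, by simp⟩, ?_, ?_⟩
  · rintro x ⟨hxS, hxV⟩
    exact ⟨not_not.mp (mt (eval_fullRankPoly_ne_zero_iff x).mp hxS), hxV⟩
  · refine hV.subset_closure_inter_setOf_eval_ne_zero _ (y := fun p => E₀ p.1 p.2)
      (by rwa [Set.mem_preimage, hx₀]) ((eval_fullRankPoly_ne_zero_iff _).mpr ?_)
    rw [hx₀, hrank, Fintype.card_fin, Fintype.card_fin]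

/-- for fixed `Q`, the set `{E : rank E = min ℓ n}` is relative
generic in `{E : EᵀQ = QᵀE and EᵀQ positive semidefinite}`. -/
theorem full_rank_relGeneric_in_VQ (ℓ n : ℕ) (hℓ : 1 ≤ ℓ) (hn : 1 ≤ n)
    (Q : Matrix (Fin ℓ) (Fin n) ℝ) :
    RelGeneric {x : Fin ℓ × Fin n → ℝ | (toMat x).rank = min ℓ n}
      {x : Fin ℓ × Fin n → ℝ |
        (toMat x)ᵀ * Q = Qᵀ * toMat x ∧ ((toMat x)ᵀ * Q).PosSemidef} :=
  full_rank_relGeneric_in_VQ_general ℓ n Q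
end
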